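/- arXiv:2010.02889 — 2 statements merged into one kernel-verified Lean document; each statement's English description precedes it below -/
import Mathlib

section
/- For a vector a ∈ ℝⁿ and φ ≥ 0, the componentwise soft-thresholding η(a, φ)ᵢ = sign(aᵢ)·max(|aᵢ| − φ, 0) minimizes the function x ↦ φ·‖x‖₁ + (1/2)‖x − a‖² over ℝⁿ. -/
lemma soft_scalar (a φ x : ℝ) (hφ : 0 ≤ φ) :
    φ * |Real.sign a * max (|a| - φ) 0| +
      (1 / 2) * (Real.sign a * max (|a| - φ) 0 - a) ^ 2 ≤
    φ * |x| + (1 / 2) * (x - a) ^ 2 := by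
  rcases le_or_gt |a| φ with h | h
  · rw [max_eq_right (by linarith)]
    simp only [mul_zero, abs_zero, zero_sub]
    nlinarith [le_abs_self (x * a), abs_mul x a, abs_nonneg x, sq_nonneg x,
      mul_le_mul_of_nonneg_left h (abs_nonneg x)]
  · rw [max_eq_left (by linarith)]
    rcases lt_trichotomy a 0 with ha | ha | ha
    · rw [Real.sign_of_neg ha, abs_of_neg ha]
      have hax : |(-1 : ℝ) * (-a - φ)| = -a - φ := by
        rw [abs_mul, abs_neg, abs_one, one_mul, abs_of_nonneg]
        rw [abs_of_neg ha] at h; linarith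
      rw [hax]
      nlinarith [sq_nonneg (x - a - φ), mul_le_mul_of_nonneg_left (neg_abs_le x) hφ,
        abs_of_neg ha]
    · subst ha; simp at h; linarith
    · rw [Real.sign_of_pos ha, abs_of_pos ha]
      have hax : |(1 : ℝ) * (a - φ)| = a - φ := by
        rw [abs_of_nonneg]; · ring
        rw [abs_of_pos ha] at h; nlinarith
      rw [hax]
      nlinarith [sq_nonneg (x - a + φ), mul_le_mul_of_nonneg_left (le_abs_self x) hφ]

/-- Componentwise soft-thresholding `η(a, φ)ᵢ = sign(aᵢ) * max (|aᵢ| - φ) 0` minimizes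
`x ↦ φ * ‖x‖₁ + (1/2) * ‖x - a‖²` over `ℝⁿ` (Euclidean norm), for `φ ≥ 0`. -/
theorem vector_soft_thresholding_minimizer (n : ℕ) (a : EuclideanSpace ℝ (Fin n))
    (φ : ℝ) (hφ : 0 ≤ φ)
    (η : EuclideanSpace ℝ (Fin n))
    (hη : ∀ i, η i = Real.sign (a i) * max (|a i| - φ) 0) :
    ∀ x : EuclideanSpace ℝ (Fin n),
      φ * (∑ i, |η i|) + (1 / 2) * ‖η - a‖ ^ 2 ≤
        φ * (∑ i, |x i|) + (1 / 2) * ‖x - a‖ ^ 2 := by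
  have hsq : ∀ y : EuclideanSpace ℝ (Fin n), ‖y‖ ^ 2 = ∑ i, (y i) ^ 2 := by
    intro y
    rw [EuclideanSpace.norm_eq, Real.sq_sqrt (by positivity)]
    simp [sq_abs]
  intro x
  rw [hsq, hsq]
  have hA : ∀ y : EuclideanSpace ℝ (Fin n),
      φ * (∑ i, |y i|) + (1 / 2) * ∑ i, ((y - a) i) ^ 2
        = ∑ i, (φ * |y i| + (1 / 2) * (y i - a i) ^ 2) := by
    intro y
    rw [Finset.mul_sum, Finset.mul_sum, ← Finset.sum_add_distrib]
    simp
  rw [hA, hA]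
  apply Finset.sum_le_sum
  intro i _
  rw [hη i]
  exact soft_scalar (a i) φ (x i) hφ
end

section
/- Let A ∈ ℝ^{m×n} have singular value decomposition A = UΣVᵀ and let τ ≥ 0. Then the singular value thresholding operator D_τ(A) = U max(Σ − τI, 0) Vᵀ is the unique minimizer of X ↦ τ‖X‖_* + (1/2)‖X − A‖_F² over ℝ^{m×n}. -/
open Matrix

/-- The matrix nuclear norm: sum of singular values, i.e. the trace of `√(AᴴA)`. -/
noncomputable def nuclearNorm {m n : ℕ} (A : Matrix (Fin m) (Fin n) ℝ) : ℝ :=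
  (((Matrix.posSemidef_conjTranspose_mul_self A).1.eigenvectorUnitary : Matrix (Fin n) (Fin n) ℝ) *
    diagonal ((RCLike.ofReal : ℝ → ℝ) ∘
      (Real.sqrt ∘ (Matrix.posSemidef_conjTranspose_mul_self A).1.eigenvalues)) *
    (star (Matrix.posSemidef_conjTranspose_mul_self A).1.eigenvectorUnitary :
      Matrix (Fin n) (Fin n) ℝ)).trace

/-!
Write the objective as `f X + ½‖X - A‖²` with `f = τ‖·‖_*`. If `G = A - D` satisfies
`⟨G, X⟩ ≤ f X` for every `X` and `⟨G, D⟩ = f D` (i.e. `G` is a subgradient of `f` at `D`),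
expanding the square gives `f D + ½‖D - A‖² + ½‖X - D‖² ≤ f X + ½‖X - A‖²`, which is both
minimality and uniqueness.

Here `G = U M Vᵀ` with `M = Σ - max(Σ - τI, 0)` rectangular diagonal with entries in `[0, τ]`,
so `GᵀG ≤ τ² I`, i.e. `‖G‖_op ≤ τ`. The inequality is then the duality
`⟨G, X⟩ ≤ ‖G‖_op ‖X‖_*`: evaluate the trace in an orthonormal eigenbasis `(q_k)` of `XᵀX` and
apply Cauchy–Schwarz to `⟨G q_k, X q_k⟩`, where `‖X q_k‖` is the `k`-th singular value.
The equality holds entrywise, since `M = τ` wherever `max(Σ - τI, 0) ≠ 0`.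
-/

open scoped MatrixOrder

lemma sub_max_sub_zero_mul_max (s t : ℝ) :
    (s - max (s - t) 0) * max (s - t) 0 = t * max (s - t) 0 := by
  rcases le_total s t with h | h
  · simp [max_eq_right (sub_nonpos.mpr h)]
  · rw [max_eq_left (sub_nonneg.mpr h)]; ring

lemma abs_sub_max_sub_zero_le {s t : ℝ} (hs : 0 ≤ s) (ht : 0 ≤ t) :
    |s - max (s - t) 0| ≤ t := by
  rw [abs_le]
  constructor <;> cases max_cases (s - t) 0 <;> linarith

lemma Fin.sum_eq_dite_of_val_ne {M : Type*} [AddCommMonoid M] {n : ℕ} (i : ℕ) (f : Fin n → M)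
    (hf : ∀ j : Fin n, (j : ℕ) ≠ i → f j = 0) :
    ∑ j, f j = if h : i < n then f ⟨i, h⟩ else 0 := by
  split_ifs with h
  · exact Fintype.sum_eq_single _ fun j hj => hf j fun e => hj (Fin.ext e)
  · exact Finset.sum_eq_zero fun j _ => hf j (by omega)

namespace Matrix

lemma trace_transpose_mul_eq_sum {m n : Type*} [Fintype m] [Fintype n] (P Q : Matrix m n ℝ) :
    (Pᵀ * Q).trace = ∑ i, ∑ j, P i j * Q i j := by
  simp only [trace, diag_apply, mul_apply, transpose_apply]
  exact Finset.sum_comm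

lemma trace_transpose_mul_le_sum_sqrt {m n : Type*} [Fintype m] [Fintype n] (P Q : Matrix m n ℝ) :
    (Pᵀ * Q).trace ≤ ∑ k, √((Pᵀ * P) k k) * √((Qᵀ * Q) k k) := by
  simp only [trace, diag_apply, mul_apply, transpose_apply, ← sq]
  exact Finset.sum_le_sum fun k _ => Real.sum_mul_le_sqrt_mul_sqrt _ _ _

lemma eq_of_sum_sum_sq_sub_nonpos {m n : Type*} [Fintype m] [Fintype n] {X Y : Matrix m n ℝ}
    (h : ∑ i, ∑ j, (X i j - Y i j) ^ 2 ≤ 0) : X = Y := by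
  have h0 := le_antisymm h (by positivity)
  rw [Finset.sum_eq_zero_iff_of_nonneg fun i _ => by positivity] at h0
  ext i j
  have hij := (Finset.sum_eq_zero_iff_of_nonneg fun j _ => sq_nonneg _).mp
    (h0 i (Finset.mem_univ i)) j (Finset.mem_univ j)
  exact sub_eq_zero.mp (pow_eq_zero_iff two_ne_zero |>.mp hij)

section Orthogonal

variable {m n : Type*} [Fintype m] [Fintype n] [DecidableEq m] {U : Matrix m m ℝ}
  {V : Matrix n n ℝ}

lemma transpose_orthogonal_mul_mul (hU : Uᵀ * U = 1) (P Q : Matrix m n ℝ) :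
    (U * P * Vᵀ)ᵀ * (U * Q * Vᵀ) = V * (Pᵀ * Q) * Vᵀ := by
  simp only [transpose_mul, transpose_transpose, Matrix.mul_assoc]
  rw [← Matrix.mul_assoc Uᵀ, hU, Matrix.one_mul]

lemma trace_transpose_orthogonal_mul_mul [DecidableEq n] (hU : Uᵀ * U = 1) (hV : Vᵀ * V = 1)
    (P Q : Matrix m n ℝ) : ((U * P * Vᵀ)ᵀ * (U * Q * Vᵀ)).trace = (Pᵀ * Q).trace := by
  rw [transpose_orthogonal_mul_mul hU, trace_mul_cycle, hV, Matrix.one_mul]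

lemma transpose_orthogonal_mul_mul_self_le [DecidableEq n] (hU : Uᵀ * U = 1) (hV : Vᵀ * V = 1)
    {M : Matrix m n ℝ} {c : ℝ} (hM : Mᵀ * M ≤ c • 1) :
    (U * M * Vᵀ)ᵀ * (U * M * Vᵀ) ≤ c • 1 := by
  rw [transpose_orthogonal_mul_mul hU]
  simpa [star_eq_conjTranspose, mul_eq_one_comm.mp hV] using star_right_conjugate_le_conjugate hM V

end Orthogonal

def IsRectDiagonal {R : Type*} [Zero R] {m n : ℕ} (M : Matrix (Fin m) (Fin n) R) : Prop :=
  ∀ (i : Fin m) (j : Fin n), (i : ℕ) ≠ (j : ℕ) → M i j = 0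

namespace IsRectDiagonal

variable {m n : ℕ}

lemma transpose_mul_self {R : Type*} [Semiring R] {M : Matrix (Fin m) (Fin n) R}
    (hM : M.IsRectDiagonal) : Mᵀ * M = diagonal fun j => ∑ i, M i j ^ 2 := by
  ext j k
  rcases eq_or_ne j k with rfl | hjk
  · simp [mul_apply, sq]
  · rw [diagonal_apply_ne _ hjk, mul_apply]
    refine Finset.sum_eq_zero fun i _ => ?_
    by_cases hij : (i : ℕ) = j
    · rw [transpose_apply, hM i k (hij.trans_ne (Fin.val_ne_of_ne hjk)), mul_zero]
    · rw [transpose_apply, hM i j hij, zero_mul]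

variable {M : Matrix (Fin m) (Fin n) ℝ}

lemma sum_sq_le (hM : M.IsRectDiagonal) {τ : ℝ} (hbound : ∀ i j, |M i j| ≤ τ)
    (j : Fin n) : ∑ i, M i j ^ 2 ≤ τ ^ 2 := by
  rw [Fin.sum_eq_dite_of_val_ne j (fun i => M i j ^ 2) fun i hi => by simp [hM i j hi]]
  split_ifs
  · exact sq_le_sq' (abs_le.mp (hbound _ _)).1 (abs_le.mp (hbound _ _)).2
  · positivity

lemma sqrt_sum_sq (hM : M.IsRectDiagonal) (hnn : ∀ i j, 0 ≤ M i j) (j : Fin n) :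
    √(∑ i, M i j ^ 2) = ∑ i, M i j := by
  rw [Fin.sum_eq_dite_of_val_ne j (fun i => M i j ^ 2) fun i hi => by simp [hM i j hi],
    Fin.sum_eq_dite_of_val_ne j (fun i => M i j) fun i hi => hM i j hi]
  split_ifs
  · exact Real.sqrt_sq (hnn _ _)
  · exact Real.sqrt_zero

lemma transpose_mul_self_le (hM : M.IsRectDiagonal) {τ : ℝ} (hbound : ∀ i j, |M i j| ≤ τ) :
    Mᵀ * M ≤ τ ^ 2 • (1 : Matrix (Fin n) (Fin n) ℝ) := by
  rw [hM.transpose_mul_self, le_iff, ← diagonal_one, ← diagonal_smul, diagonal_sub]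
  exact posSemidef_diagonal_iff.mpr fun j => by
    simpa using sub_nonneg.mpr (hM.sum_sq_le hbound j)

end IsRectDiagonal

end Matrix

section NuclearNorm

variable {m n : ℕ}

lemma nuclearNorm_eq_sum_sqrt_eigenvalues (X : Matrix (Fin m) (Fin n) ℝ) :
    nuclearNorm X = ∑ k, √((posSemidef_conjTranspose_mul_self X).1.eigenvalues k) := by
  rw [nuclearNorm, trace_mul_cycle, Unitary.coe_star_mul_self, one_mul, trace_diagonal]
  rfl

lemma nuclearNorm_eq_trace_sqrt (X : Matrix (Fin m) (Fin n) ℝ) :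
    nuclearNorm X = (CFC.sqrt (Xᵀ * X)).trace := by
  have hX := posSemidef_conjTranspose_mul_self X
  rw [conjTranspose_eq_transpose_of_trivial] at hX
  rw [CFC.sqrt_eq_real_sqrt _ hX.nonneg, cfcₙ_eq_cfc, hX.1.cfc_eq]
  rfl

lemma nuclearNorm_eq_trace_of_mul_self_eq {X : Matrix (Fin m) (Fin n) ℝ}
    {S : Matrix (Fin n) (Fin n) ℝ} (hS : S.PosSemidef) (h : S * S = Xᵀ * X) :
    nuclearNorm X = S.trace := by
  rw [nuclearNorm_eq_trace_sqrt, CFC.sqrt_unique h hS.nonneg]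

lemma nuclearNorm_orthogonal_mul_mul_transpose {U : Matrix (Fin m) (Fin m) ℝ}
    {V : Matrix (Fin n) (Fin n) ℝ} (hU : Uᵀ * U = 1) (hV : Vᵀ * V = 1)
    (X : Matrix (Fin m) (Fin n) ℝ) : nuclearNorm (U * X * Vᵀ) = nuclearNorm X := by
  set S := CFC.sqrt (Xᵀ * X)
  have hS : S.PosSemidef := (CFC.sqrt_nonneg _).posSemidef
  have hSS : S * S = Xᵀ * X :=
    CFC.sqrt_mul_sqrt_self _ (by simpa using (posSemidef_conjTranspose_mul_self X).nonneg)
  have hVSV : (V * S * Vᵀ).PosSemidef := by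
    simpa using hS.mul_mul_conjTranspose_same V
  rw [nuclearNorm_eq_trace_of_mul_self_eq hVSV, nuclearNorm_eq_trace_sqrt, trace_mul_cycle, hV,
    one_mul]
  calc V * S * Vᵀ * (V * S * Vᵀ) = V * (S * (Vᵀ * V) * S) * Vᵀ := by simp only [mul_assoc]
    _ = (U * X * Vᵀ)ᵀ * (U * X * Vᵀ) := by
      rw [hV, mul_one, hSS, transpose_orthogonal_mul_mul hU]

lemma Matrix.IsRectDiagonal.nuclearNorm_eq_sum {T : Matrix (Fin m) (Fin n) ℝ}
    (hT : T.IsRectDiagonal) (hnn : ∀ i j, 0 ≤ T i j) : nuclearNorm T = ∑ i, ∑ j, T i j := by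
  have hS : (diagonal fun j => ∑ i, T i j).PosSemidef :=
    posSemidef_diagonal_iff.mpr fun j => Finset.sum_nonneg fun i _ => hnn i j
  rw [nuclearNorm_eq_trace_of_mul_self_eq hS, trace_diagonal, Finset.sum_comm]
  rw [diagonal_mul_diagonal, hT.transpose_mul_self]
  congr 1; ext j
  rw [← hT.sqrt_sum_sq hnn, Real.mul_self_sqrt (Finset.sum_nonneg fun i _ => sq_nonneg _)]

lemma trace_transpose_mul_le_mul_nuclearNorm {G : Matrix (Fin m) (Fin n) ℝ} {τ : ℝ}
    (hτ : 0 ≤ τ) (hG : Gᵀ * G ≤ τ ^ 2 • 1) (X : Matrix (Fin m) (Fin n) ℝ) :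
    (Gᵀ * X).trace ≤ τ * nuclearNorm X := by
  set hX := (posSemidef_conjTranspose_mul_self X).1
  set Q : Matrix (Fin n) (Fin n) ℝ := ↑hX.eigenvectorUnitary
  have hQ : Q * Qᵀ = 1 := by
    simpa [Q, star_eq_conjTranspose] using Unitary.coe_mul_star_self hX.eigenvectorUnitary
  have hXQ : (X * Q)ᵀ * (X * Q) = diagonal hX.eigenvalues := by
    simpa [Q, Unitary.conjStarAlgAut_star_apply, star_eq_conjTranspose, Matrix.mul_assoc]
      using hX.conjStarAlgAut_star_eigenvectorUnitary
  have hGQ : (G * Q)ᵀ * (G * Q) ≤ τ ^ 2 • 1 := by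
    simpa [star_eq_conjTranspose, Matrix.mul_assoc, mul_eq_one_comm.mp hQ]
      using star_left_conjugate_le_conjugate hG Q
  calc (Gᵀ * X).trace = ((G * Q)ᵀ * (X * Q)).trace := by
        rw [transpose_mul, Matrix.mul_assoc, trace_mul_comm Qᵀ, Matrix.mul_assoc,
          Matrix.mul_assoc, hQ, Matrix.mul_one]
    _ ≤ ∑ k, √(((G * Q)ᵀ * (G * Q)) k k) * √(((X * Q)ᵀ * (X * Q)) k k) :=
        trace_transpose_mul_le_sum_sqrt _ _
    _ ≤ ∑ k, τ * √(hX.eigenvalues k) := by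
        refine Finset.sum_le_sum fun k _ => ?_
        rw [hXQ, diagonal_apply_eq]
        refine mul_le_mul_of_nonneg_right ?_ (Real.sqrt_nonneg _)
        refine Real.sqrt_le_iff.mpr ⟨hτ, ?_⟩
        simpa using (le_iff.mp hGQ).diag_nonneg (i := k)
    _ = τ * nuclearNorm X := by rw [nuclearNorm_eq_sum_sqrt_eigenvalues, Finset.mul_sum]

end NuclearNorm

lemma objective_add_half_sum_sq_le_of_subgradient {ι κ : Type*} [Fintype ι] [Fintype κ]
    {f : Matrix ι κ ℝ → ℝ} {A D : Matrix ι κ ℝ} (hle : ∀ X, ((A - D)ᵀ * X).trace ≤ f X)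
    (heq : ((A - D)ᵀ * D).trace = f D) (X : Matrix ι κ ℝ) :
    f D + 1 / 2 * ∑ i, ∑ j, (D i j - A i j) ^ 2 + 1 / 2 * ∑ i, ∑ j, (X i j - D i j) ^ 2 ≤
      f X + 1 / 2 * ∑ i, ∑ j, (X i j - A i j) ^ 2 := by
  have hX := hle X
  rw [trace_transpose_mul_eq_sum] at hX heq
  have hsplit : ∑ i, ∑ j, (X i j - A i j) ^ 2 =
      ∑ i, ∑ j, (X i j - D i j) ^ 2 + ∑ i, ∑ j, (D i j - A i j) ^ 2 -
        2 * ∑ i, ∑ j, (A - D) i j * X i j + 2 * ∑ i, ∑ j, (A - D) i j * D i j := by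
    simp only [Finset.mul_sum, ← Finset.sum_add_distrib, ← Finset.sum_sub_distrib, Matrix.sub_apply]
    exact Finset.sum_congr rfl fun i _ => Finset.sum_congr rfl fun j _ => by ring
  linarith

/-- Let `A = UΣVᵀ` be a singular value decomposition (`U`, `V` orthogonal, `Σ`
nonnegative and supported on the diagonal) and `τ ≥ 0`. Then the singular value
thresholding operator `D_τ(A) = U max(Σ − τI, 0) Vᵀ` is the unique minimizer of
`X ↦ τ‖X‖_* + (1/2)‖X − A‖_F²`. -/
theorem singular_value_thresholding_unique_minimizer {m n : ℕ}
    (A : Matrix (Fin m) (Fin n) ℝ) (τ : ℝ) (hτ : 0 ≤ τ)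
    (U : Matrix (Fin m) (Fin m) ℝ) (V : Matrix (Fin n) (Fin n) ℝ)
    (Sig : Matrix (Fin m) (Fin n) ℝ)
    (hU : Uᵀ * U = 1) (hV : Vᵀ * V = 1)
    (hSigdiag : ∀ (i : Fin m) (j : Fin n), (i : ℕ) ≠ (j : ℕ) → Sig i j = 0)
    (hSignn : ∀ i j, 0 ≤ Sig i j)
    (hA : A = U * Sig * Vᵀ)
    (D : Matrix (Fin m) (Fin n) ℝ)
    (hD : D = U * (Matrix.of fun i j =>
        max (Sig i j - (if (i : ℕ) = (j : ℕ) then τ else 0)) 0) * Vᵀ) :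
    (∀ X : Matrix (Fin m) (Fin n) ℝ,
        τ * nuclearNorm D + (1 / 2) * ∑ i, ∑ j, (D i j - A i j) ^ 2 ≤
          τ * nuclearNorm X + (1 / 2) * ∑ i, ∑ j, (X i j - A i j) ^ 2) ∧
      (∀ X : Matrix (Fin m) (Fin n) ℝ,
        τ * nuclearNorm X + (1 / 2) * ∑ i, ∑ j, (X i j - A i j) ^ 2 ≤
            τ * nuclearNorm D + (1 / 2) * ∑ i, ∑ j, (D i j - A i j) ^ 2 →
          X = D) := by
  set T : Matrix (Fin m) (Fin n) ℝ := Matrix.of fun i j =>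
    max (Sig i j - (if (i : ℕ) = (j : ℕ) then τ else 0)) 0
  have hT : T.IsRectDiagonal := fun i j h => by simp [T, h, hSigdiag i j h]
  have hTnn : ∀ i j, 0 ≤ T i j := fun i j => le_max_right _ _
  have hM : (Sig - T).IsRectDiagonal := fun i j h => by simp [hSigdiag i j h, hT i j h]
  have hMbound : ∀ i j, |(Sig - T) i j| ≤ τ := fun i j => by
    by_cases h : (i : ℕ) = j
    · simpa [T, h] using abs_sub_max_sub_zero_le (hSignn i j) hτ
    · simp [hM i j h, hτ]
  have hMT : ∀ i j, (Sig - T) i j * T i j = τ * T i j := fun i j => by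
    by_cases h : (i : ℕ) = j
    · simpa [T, h] using sub_max_sub_zero_mul_max (Sig i j) τ
    · simp [hT i j h]
  have hAD : A - D = U * (Sig - T) * Vᵀ := by rw [hA, hD, Matrix.mul_sub, Matrix.sub_mul]
  have hsubgrad : ∀ X, ((A - D)ᵀ * X).trace ≤ τ * nuclearNorm X := fun X => by
    rw [hAD]
    exact trace_transpose_mul_le_mul_nuclearNorm hτ
      (transpose_orthogonal_mul_mul_self_le hU hV (hM.transpose_mul_self_le hMbound)) X
  have hsubgrad_D : ((A - D)ᵀ * D).trace = τ * nuclearNorm D := by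
    rw [hAD, hD, trace_transpose_orthogonal_mul_mul hU hV,
      nuclearNorm_orthogonal_mul_mul_transpose hU hV, hT.nuclearNorm_eq_sum hTnn,
      trace_transpose_mul_eq_sum]
    simp only [hMT, Finset.mul_sum]
  have key := objective_add_half_sum_sq_le_of_subgradient hsubgrad hsubgrad_D
  refine ⟨fun X => ?_, fun X hX => eq_of_sum_sum_sq_sub_nonpos ?_⟩
  · linarith [key X, (by positivity : 0 ≤ ∑ i, ∑ j, (X i j - D i j) ^ 2)]
  · linarith [key X]
end
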